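/- Let a : ℝ → ℝ be Lipschitz and v : ℝ → ℝ Schwartz. Then ∫_ℝ a(x) v(x) v'(x) dx = -(1/2) ∫_ℝ a'(x) v(x)² dx. -/

import Mathlib

open scoped NNReal
open MeasureTheory Filter Topology SchwartzMap

/-! A Lipschitz function is absolutely continuous on every interval, so integration by parts
holds on `[-R, R]`; as `R → ∞` the boundary terms vanish because `a` grows at most linearly
while a Schwartz function decays faster than any power. Applied to the Schwartz function `v²`,
whose derivative is `2 v v'`, this gives the identity. -/

theorem integral_mul_deriv_eq_deriv_mul_of_absolutelyContinuousOnInterval {f g : ℝ → ℝ}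
    {l r : ℝ} (hf : ∀ s t, AbsolutelyContinuousOnInterval f s t)
    (hg : ∀ s t, AbsolutelyContinuousOnInterval g s t)
    (hfg' : Integrable fun x ↦ f x * deriv g x) (hf'g : Integrable fun x ↦ deriv f x * g x)
    (h_bot : Tendsto (fun x ↦ f x * g x) atBot (𝓝 l))
    (h_top : Tendsto (fun x ↦ f x * g x) atTop (𝓝 r)) :
    ∫ x, f x * deriv g x = r - l - ∫ x, deriv f x * g x := by
  have hlhs := intervalIntegral_tendsto_integral hfg' tendsto_neg_atTop_atBot tendsto_id
  have hrhs := intervalIntegral_tendsto_integral hf'g tendsto_neg_atTop_atBot tendsto_id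
  refine tendsto_nhds_unique hlhs <|
    (((h_top.comp tendsto_id).sub (h_bot.comp tendsto_neg_atTop_atBot)).sub hrhs).congr
      fun R ↦ ((hf (-R) R).integral_mul_deriv_eq_deriv_mul (hg (-R) R)).symm

theorem LipschitzWith.norm_mul_le {K : ℝ≥0} {a : ℝ → ℝ} (ha : LipschitzWith K a) (x y : ℝ) :
    ‖a x * y‖ ≤ ‖a 0‖ * ‖y‖ + K * ‖x * y‖ := by
  have hax : ‖a x‖ ≤ ‖a 0‖ + K * ‖x‖ := by
    simpa using (norm_le_norm_add_norm_sub' (a x) (a 0)).trans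
      (add_le_add_right (ha.norm_sub_le x 0) _)
  rw [norm_mul, norm_mul]
  nlinarith [norm_nonneg y]

section LipschitzMulSchwartz

variable {K : ℝ≥0} {a : ℝ → ℝ}

theorem LipschitzWith.integrable_mul_schwartzMap (ha : LipschitzWith K a) (u : 𝓢(ℝ, ℝ)) :
    Integrable fun x ↦ a x * u x := by
  refine ((u.integrable.norm.const_mul ‖a 0‖).add
    ((u.integrable_pow_mul volume 1).const_mul K)).mono'
    (ha.continuous.mul u.continuous).aestronglyMeasurable (Eventually.of_forall fun x ↦ ?_)
  simpa [norm_mul] using ha.norm_mul_le x (u x)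

theorem LipschitzWith.tendsto_mul_schwartzMap_cocompact (ha : LipschitzWith K a)
    (u : 𝓢(ℝ, ℝ)) : Tendsto (fun x ↦ a x * u x) (cocompact ℝ) (𝓝 0) := by
  set xu := smulLeftCLM ℝ (fun x : ℝ ↦ x) u
  have hxu : ∀ x, xu x = x * u x := fun x ↦ by
    simp [xu, Function.HasTemperateGrowth.id']
  have hbound : Tendsto (fun x ↦ ‖a 0‖ * ‖u x‖ + K * ‖xu x‖) (cocompact ℝ) (𝓝 0) := by
    simpa using (u.tendsto_cocompact.norm.const_mul ‖a 0‖).add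
      (xu.tendsto_cocompact.norm.const_mul (K : ℝ))
  refine squeeze_zero_norm (fun x ↦ ?_) hbound
  simpa [hxu] using ha.norm_mul_le x (u x)

theorem LipschitzWith.integral_mul_deriv_schwartzMap (ha : LipschitzWith K a) (u : 𝓢(ℝ, ℝ)) :
    ∫ x, a x * deriv u x = -∫ x, deriv a x * u x := by
  have hac : ∀ s t, AbsolutelyContinuousOnInterval a s t := fun s t ↦
    (ha.lipschitzOnWith (s := Set.uIcc s t)).absolutelyContinuousOnInterval
  have huc : ∀ s t, AbsolutelyContinuousOnInterval u s t := fun s t ↦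
    ((u.smooth 1).contDiffOn).absolutelyContinuousOnInterval
  have hau' : Integrable fun x ↦ a x * deriv u x := by
    simpa [derivCLM_apply] using ha.integrable_mul_schwartzMap (derivCLM ℝ ℝ u)
  have ha'u : Integrable fun x ↦ deriv a x * u x :=
    u.integrable.bdd_mul (measurable_deriv a).aestronglyMeasurable
      (Eventually.of_forall fun _ ↦ norm_deriv_le_of_lipschitz ha)
  have hau := ha.tendsto_mul_schwartzMap_cocompact u
  rw [cocompact_eq_atBot_atTop] at hau
  rw [integral_mul_deriv_eq_deriv_mul_of_absolutelyContinuousOnInterval hac huc hau' ha'u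
    (hau.mono_left le_sup_left) (hau.mono_left le_sup_right)]
  ring

end LipschitzMulSchwartz

/-- Integration by parts for the transport term: for `a`
Lipschitz and `v` Schwartz, `∫ a v v' = -(1/2) ∫ a' v²`. -/
theorem transport_term_integration_by_parts (K : ℝ≥0) (a : ℝ → ℝ)
    (ha : LipschitzWith K a) (v : SchwartzMap ℝ ℝ) :
    ∫ x : ℝ, a x * v x * deriv (⇑v) x = -(1/2) * ∫ x : ℝ, deriv a x * v x ^ 2 := by
  set w := pairing (ContinuousLinearMap.mul ℝ ℝ) v v
  have hw : ⇑w = fun x ↦ v x ^ 2 := by ext x; simp [w, sq]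
  have hderiv : ∀ x, deriv w x = 2 * v x * deriv v x := fun x ↦ by
    rw [hw, ((v.hasDerivAt x).fun_pow 2).deriv]; ring
  have hibp := ha.integral_mul_deriv_schwartzMap w
  simp only [hderiv] at hibp
  simp only [hw] at hibp
  have hdouble : ∫ x, a x * (2 * v x * deriv v x) = 2 * ∫ x, a x * v x * deriv v x := by
    rw [← integral_const_mul]
    congr 1 with x
    ring
  linarith
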